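/- Fix an integer p ≥ 1, set n = 2p, and let θ, the couplings g_{ab} (with g ≠ 0 and g_2 arbitrary real numbers), and the matrices F_{ab} be as in the q = p case of the AIII construction. Then for all indices 1 ≤ a, b, c, d ≤ n with a ≠ b and c ≠ d, the symmetric-pair combinatoric identity holds: 2·g_{cd}·((F_{ab})_{cc} − (F_{ab})_{dd}) = (1/4)·Σ_{(x,y) ∈ {(a,b),(b,a)}} [ g_{cy}·δ(d,x) − g_{dx}·δ(c,y) + g_{θ(c)y}·δ(θ(d),x) − g_{θ(d)x}·δ(θ(c),y) + g_{cθ(y)}·δ(d,θ(x)) − g_{dθ(x)}·δ(c,θ(y)) + g_{θ(c)θ(y)}·δ(θ(d),θ(x)) − g_{θ(d)θ(x)}·δ(θ(c),θ(y)) ]. (This is the existence part of Theorem 3.3 for the symmetric pairs of the AIII-series with q = p, corresponding to the complex Grassmannians SU(p,p)/S(U(p)×U(p)).) -/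

import Mathlib

open Matrix

/-- The involution `θ` of `{1,…,2p}` (0-based: `{0,…,2p−1}`) exchanging the first
and third blocks: `θ(a) = a + p` for `a < p` and `θ(a) = a − p` otherwise. -/
def theta1 (p : ℕ) (a : Fin (2*p)) : Fin (2*p) :=
  if h : (a : ℕ) < p then ⟨a + p, by omega⟩
  else ⟨(a : ℕ) - p, by have := a.isLt; omega⟩

/-- The coupling constants for the AIII construction with `q = p`:
`g_{aa} = 0`, `g_{ab} = g₂` if `b = θ(a)`, and `g_{ab} = g` otherwise. -/
def g10 (p : ℕ) (g g2 : ℝ) (a b : Fin (2*p)) : ℝ :=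
  if a = b then 0 else if b = theta1 p a then g2 else g

/-- The matrices `F_{ab} = -(1/4)(E_{aa} + E_{θ(a)θ(a)} + E_{bb} + E_{θ(b)θ(b)}) + (1/n)·1`
for the AIII construction with `q = p`, `n = 2p`. -/
noncomputable def F10 (p : ℕ) (a b : Fin (2*p)) : Matrix (Fin (2*p)) (Fin (2*p)) ℝ :=
  -(1/4 : ℝ) • (single a a 1 + single (theta1 p a) (theta1 p a) 1
      + single b b 1 + single (theta1 p b) (theta1 p b) 1)
    + ((2*p : ℝ))⁻¹ • 1

/-- Kronecker delta. -/
def kd {n : ℕ} (i j : Fin n) : ℝ := if i = j then 1 else 0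

/-! Since `g_{θx θy} = g_{xy}` and `δ` is invariant under `θ × θ`, the eight terms of each bracket
coincide in pairs. The diagonal of `F_{ab}` counts the occurrences of an index among
`a, θa, b, θb`, and on the support of `δ(d, z)` one may replace `g_{cd}` by `g_{cz}`; this brings
both sides to `(δ_{da} - δ_{db})(g_{ca} - g_{cb})` plus its `θ`-image, which is symmetric in `c`
and `d` once `g_{cx}` is written as `g (1 - δ_{cx}) + (g₂ - g) δ_{θc,x}`. -/

lemma theta1_val (p : ℕ) (a : Fin (2*p)) :
    (theta1 p a : ℕ) = if (a : ℕ) < p then (a : ℕ) + p else (a : ℕ) - p := by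
  unfold theta1; split_ifs <;> rfl

lemma theta1_involutive (p : ℕ) : Function.Involutive (theta1 p) := by
  intro a
  have := a.isLt
  rw [Fin.ext_iff, theta1_val, theta1_val]
  split_ifs <;> omega

lemma theta1_ne_self (p : ℕ) (a : Fin (2*p)) : theta1 p a ≠ a := by
  have := a.isLt
  rw [Ne, Fin.ext_iff, theta1_val]
  split_ifs <;> omega

lemma kd_comm {n : ℕ} (i j : Fin n) : kd i j = kd j i := by
  simp only [kd, eq_comm]

lemma kd_theta1_right (p : ℕ) (i j : Fin (2*p)) : kd i (theta1 p j) = kd (theta1 p i) j := by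
  simp only [kd, (theta1_involutive p).eq_iff]

lemma apply_mul_kd {n : ℕ} (f : Fin n → ℝ) (i j : Fin n) : f i * kd i j = f j * kd i j := by
  unfold kd
  split_ifs with h <;> simp [h]

lemma g10_eq_kd (p : ℕ) (g g2 : ℝ) (a x : Fin (2*p)) :
    g10 p g g2 a x = g * (1 - kd a x) + (g2 - g) * kd (theta1 p a) x := by
  have hθ := theta1_ne_self p a
  rcases eq_or_ne a x with rfl | hax
  · simp [g10, kd, hθ]
  rcases eq_or_ne x (theta1 p a) with rfl | hxθ
  · simp [g10, kd, hax]
  simp [g10, kd, hax, hxθ, hxθ.symm]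

lemma g10_comm (p : ℕ) (g g2 : ℝ) (a b : Fin (2*p)) : g10 p g g2 a b = g10 p g g2 b a := by
  rw [g10_eq_kd, g10_eq_kd, kd_comm a b, kd_comm (theta1 p b), kd_theta1_right]

lemma F10_apply_self (p : ℕ) (a b x : Fin (2*p)) : F10 p a b x x =
    -(1/4) * (kd x a + kd x (theta1 p a) + kd x b + kd x (theta1 p b)) + (2*p : ℝ)⁻¹ := by
  simp only [F10, Matrix.add_apply, Matrix.smul_apply, single_apply, one_apply_eq, kd,
    smul_eq_mul, and_self, eq_comm (b := x)]
  ring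

lemma bracket_theta1_eq_two_mul (p : ℕ) (g g2 : ℝ) (c d x y : Fin (2*p)) :
    g10 p g g2 c y * kd d x - g10 p g g2 d x * kd c y
      + g10 p g g2 (theta1 p c) y * kd (theta1 p d) x
      - g10 p g g2 (theta1 p d) x * kd (theta1 p c) y
      + g10 p g g2 c (theta1 p y) * kd d (theta1 p x)
      - g10 p g g2 d (theta1 p x) * kd c (theta1 p y)
      + g10 p g g2 (theta1 p c) (theta1 p y) * kd (theta1 p d) (theta1 p x)
      - g10 p g g2 (theta1 p d) (theta1 p x) * kd (theta1 p c) (theta1 p y) =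
    2 * (g10 p g g2 c y * kd d x - g10 p g g2 d x * kd c y
      + g10 p g g2 c (theta1 p y) * kd d (theta1 p x)
      - g10 p g g2 d (theta1 p x) * kd c (theta1 p y)) := by
  simp only [g10_eq_kd, kd_theta1_right, theta1_involutive p _]
  ring

lemma g10_mul_sum_kd_sub (p : ℕ) (g g2 : ℝ) (a b c d : Fin (2*p)) :
    g10 p g g2 c d * (kd d a + kd d (theta1 p a) + kd d b + kd d (theta1 p b))
      - (g10 p g g2 c b * kd d a + g10 p g g2 c a * kd d b
        + g10 p g g2 c (theta1 p b) * kd d (theta1 p a)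
        + g10 p g g2 c (theta1 p a) * kd d (theta1 p b)) =
    (kd d a - kd d b) * (g10 p g g2 c a - g10 p g g2 c b)
      + (kd d (theta1 p a) - kd d (theta1 p b))
        * (g10 p g g2 c (theta1 p a) - g10 p g g2 c (theta1 p b)) := by
  rw [mul_add, mul_add, mul_add, apply_mul_kd (g10 p g g2 c) d a,
    apply_mul_kd (g10 p g g2 c) d b, apply_mul_kd (g10 p g g2 c) d (theta1 p a),
    apply_mul_kd (g10 p g g2 c) d (theta1 p b)]
  ring

lemma kd_sub_mul_g10_sub_comm (p : ℕ) (g g2 : ℝ) (a b c d : Fin (2*p)) :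
    (kd d a - kd d b) * (g10 p g g2 c a - g10 p g g2 c b)
      + (kd d (theta1 p a) - kd d (theta1 p b))
        * (g10 p g g2 c (theta1 p a) - g10 p g g2 c (theta1 p b)) =
    (kd c a - kd c b) * (g10 p g g2 d a - g10 p g g2 d b)
      + (kd c (theta1 p a) - kd c (theta1 p b))
        * (g10 p g g2 d (theta1 p a) - g10 p g g2 d (theta1 p b)) := by
  simp only [g10_eq_kd, kd_theta1_right, theta1_involutive p _]
  ring

theorem stmt_10_general (p : ℕ) (g g2 : ℝ)
    (a b c d : Fin (2*p)) :
    2 * g10 p g g2 c d * (F10 p a b c c - F10 p a b d d) =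
      (1/4 : ℝ) *
       ((g10 p g g2 c b * kd d a - g10 p g g2 d a * kd c b
         + g10 p g g2 (theta1 p c) b * kd (theta1 p d) a
         - g10 p g g2 (theta1 p d) a * kd (theta1 p c) b
         + g10 p g g2 c (theta1 p b) * kd d (theta1 p a)
         - g10 p g g2 d (theta1 p a) * kd c (theta1 p b)
         + g10 p g g2 (theta1 p c) (theta1 p b) * kd (theta1 p d) (theta1 p a)
         - g10 p g g2 (theta1 p d) (theta1 p a) * kd (theta1 p c) (theta1 p b))
        +
        (g10 p g g2 c a * kd d b - g10 p g g2 d b * kd c a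
         + g10 p g g2 (theta1 p c) a * kd (theta1 p d) b
         - g10 p g g2 (theta1 p d) b * kd (theta1 p c) a
         + g10 p g g2 c (theta1 p a) * kd d (theta1 p b)
         - g10 p g g2 d (theta1 p b) * kd c (theta1 p a)
         + g10 p g g2 (theta1 p c) (theta1 p a) * kd (theta1 p d) (theta1 p b)
         - g10 p g g2 (theta1 p d) (theta1 p b) * kd (theta1 p c) (theta1 p a))) := by
  rw [F10_apply_self, F10_apply_self, bracket_theta1_eq_two_mul, bracket_theta1_eq_two_mul]
  linear_combination (1/2 : ℝ) * g10_mul_sum_kd_sub p g g2 a b c d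
    - (1/2 : ℝ) * g10_mul_sum_kd_sub p g g2 a b d c + (1/2 : ℝ) * kd_sub_mul_g10_sub_comm p g g2 a b c d
    - (1/2 : ℝ) * (kd c a + kd c (theta1 p a) + kd c b + kd c (theta1 p b))
      * g10_comm p g g2 c d

theorem stmt_10 (p : ℕ) (hp : 1 ≤ p) (g g2 : ℝ) (hg : g ≠ 0)
    (a b c d : Fin (2*p)) (hab : a ≠ b) (hcd : c ≠ d) :
    2 * g10 p g g2 c d * (F10 p a b c c - F10 p a b d d) =
      (1/4 : ℝ) *
       ((g10 p g g2 c b * kd d a - g10 p g g2 d a * kd c b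
         + g10 p g g2 (theta1 p c) b * kd (theta1 p d) a
         - g10 p g g2 (theta1 p d) a * kd (theta1 p c) b
         + g10 p g g2 c (theta1 p b) * kd d (theta1 p a)
         - g10 p g g2 d (theta1 p a) * kd c (theta1 p b)
         + g10 p g g2 (theta1 p c) (theta1 p b) * kd (theta1 p d) (theta1 p a)
         - g10 p g g2 (theta1 p d) (theta1 p a) * kd (theta1 p c) (theta1 p b))
        +
        (g10 p g g2 c a * kd d b - g10 p g g2 d b * kd c a
         + g10 p g g2 (theta1 p c) a * kd (theta1 p d) b
         - g10 p g g2 (theta1 p d) b * kd (theta1 p c) a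
         + g10 p g g2 c (theta1 p a) * kd d (theta1 p b)
         - g10 p g g2 d (theta1 p b) * kd c (theta1 p a)
         + g10 p g g2 (theta1 p c) (theta1 p a) * kd (theta1 p d) (theta1 p b)
         - g10 p g g2 (theta1 p d) (theta1 p b) * kd (theta1 p c) (theta1 p a))) :=
  stmt_10_general p g g2 a b c d
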